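/- Let A be a weighted directed graph on n vertices that is weakly connected and hierarchically decomposable, with pairwise distinct minimal source subgraphs S₁, …, S_l. For each m let l_m = ∑ i ∈ S_m, ∑ j ∈ S_m, A i j be the total weight of edges inside S_m, and let m₀ = W − ∑ m, l_m be the total weight of the remaining edges, where W = ∑ i, ∑ j, A i j. For each m with l_m > 0 let η_f(S_m) denote the forward democracy coefficient of the induced subgraph, i.e. of the submatrix of A obtained by restricting rows and columns to S_m. Then η_f(A) = (∑ over those m with l_m > 0 of η_f(S_m) * l_m) / (m₀ + ∑ m, l_m). -/

import Mathlib

open Matrix BigOperators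

noncomputable section

variable {V : Type} [Fintype V] [DecidableEq V]

/-- Weighted in-degree vector. -/
def indeg (A : Matrix V V ℝ) (j : V) : ℝ := ∑ i, A i j

/-- Weighted in-degree Laplacian `L = diag d - A`. -/
def inLap (A : Matrix V V ℝ) : Matrix V V ℝ := Matrix.diagonal (indeg A) - A

/-- Weak connectivity. -/
def WeaklyConnected (A : Matrix V V ℝ) : Prop :=
  ∀ i j : V, Relation.ReflTransGen (fun i j => 0 < A i j ∨ 0 < A j i) i j

/-- A set of vertices with no incoming edges from outside. -/
def InClosed (A : Matrix V V ℝ) (S : Finset V) : Prop :=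
  ∀ i j : V, i ∉ S → j ∈ S → A i j = 0

/-- Minimal source subgraph. -/
def MinSourceSubgraph (A : Matrix V V ℝ) (S : Finset V) : Prop :=
  S.Nonempty ∧ InClosed A S ∧ ∀ T ⊆ S, T.Nonempty → T ≠ S → ¬ InClosed A T

/-- Total edge weight. -/
def totalWeight (A : Matrix V V ℝ) : ℝ := ∑ i, ∑ j, A i j

/-- `g` is a forward hierarchical level vector: a minimizer of `‖Lᵀ x - d‖₂`. -/
def IsFHL (A : Matrix V V ℝ) (g : V → ℝ) : Prop :=
  ∀ x : V → ℝ,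
    ∑ i, ((inLap A)ᵀ.mulVec g i - indeg A i) ^ 2 ≤
      ∑ i, ((inLap A)ᵀ.mulVec x i - indeg A i) ^ 2

/-- Forward democracy coefficient, computed from a forward hierarchical level vector `g`. -/
def etaF (A : Matrix V V ℝ) (g : V → ℝ) : ℝ :=
  1 - (∑ i, ∑ j, A i j * (g j - g i)) / totalWeight A

/-- The induced subgraph: the submatrix of `A` with rows and columns restricted to `S`. -/
def submatrixOn (A : Matrix V V ℝ) (S : Finset V) : Matrix {i // i ∈ S} {i // i ∈ S} ℝ :=
  fun i j => A i.val j.val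

/-!
The forward level vector `g` is a least-squares solution of `Lᵀ x = d`, so `η_f(A) · W` is the
total mass of the residual `ρ = d - Lᵀ g`, and `ρ` is the unique vector with `L ρ = 0` and
`d - ρ ∈ range Lᵀ`. Distinct minimal source subgraphs are disjoint and in-closed, so gluing the
residuals of the subproblems on them gives a vector `ρ'` with `L ρ' = 0`, and `d - ρ'` agrees with
`Lᵀ` of the glued sub-level vectors on every `S_m`. What remains of `d - ρ'` lives outside all
`S_m`, where the corresponding block of `Lᵀ` is invertible by a maximum principle: the vertices
where `|z|` is maximal for a kernel vector `z` form an in-closed set, which would contain a minimal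
source subgraph. Hence `ρ = ρ'`, and summing gives the weighted average.
-/

section LeastSquares

variable {m k : Type} [Fintype m] [Fintype k]

def IsLeastSquaresSolution (M : Matrix m k ℝ) (b : m → ℝ) (g : k → ℝ) : Prop :=
  ∀ x, ∑ i, ((M *ᵥ g) i - b i) ^ 2 ≤ ∑ i, ((M *ᵥ x) i - b i) ^ 2

theorem eq_zero_of_forall_nonneg_quadratic {a c : ℝ} (h : ∀ t : ℝ, 0 ≤ t ^ 2 * c - 2 * t * a) :
    a = 0 := by
  have hc : 0 ≤ c := by nlinarith [h 1, h (-1)]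
  have hvertex :
      (a / (c + 1)) ^ 2 * c - 2 * (a / (c + 1)) * a = -(a ^ 2 * (c + 2)) / (c + 1) ^ 2 := by
    field_simp
    ring
  have := h (a / (c + 1))
  rw [hvertex, le_div_iff₀ (by positivity)] at this
  nlinarith [sq_nonneg a]

variable {M : Matrix m k ℝ} {b : m → ℝ} {g : k → ℝ}

theorem IsLeastSquaresSolution.transpose_mulVec_sub_eq_zero (hg : IsLeastSquaresSolution M b g) :
    Mᵀ *ᵥ (b - M *ᵥ g) = 0 := by
  set w := Mᵀ *ᵥ (b - M *ᵥ g)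
  have hw : (M *ᵥ w) ⬝ᵥ (b - M *ᵥ g) = w ⬝ᵥ w := by
    rw [dotProduct_comm, dotProduct_mulVec, ← mulVec_transpose, dotProduct_comm]
  have hquad : ∀ t : ℝ, 0 ≤ t ^ 2 * ((M *ᵥ w) ⬝ᵥ (M *ᵥ w)) - 2 * t * (w ⬝ᵥ w) := by
    intro t
    have hexpand : ∑ i, ((M *ᵥ (g + t • w)) i - b i) ^ 2 = ∑ i, ((M *ᵥ g) i - b i) ^ 2
        + (t ^ 2 * ((M *ᵥ w) ⬝ᵥ (M *ᵥ w)) - 2 * t * ((M *ᵥ w) ⬝ᵥ (b - M *ᵥ g))) := by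
      simp only [dotProduct, mulVec_add, mulVec_smul, Pi.add_apply, Pi.sub_apply,
        Pi.smul_apply, smul_eq_mul, Finset.mul_sum, ← Finset.sum_sub_distrib,
        ← Finset.sum_add_distrib]
      exact Finset.sum_congr rfl fun i _ => by ring
    have := hg (g + t • w)
    rw [hexpand, hw] at this
    linarith
  exact dotProduct_self_eq_zero.1 (eq_zero_of_forall_nonneg_quadratic hquad)

theorem IsLeastSquaresSolution.sub_mulVec_eq (hg : IsLeastSquaresSolution M b g)
    {ρ : m → ℝ} {x₀ : k → ℝ} (hρ : Mᵀ *ᵥ ρ = 0) (hx₀ : M *ᵥ x₀ = b - ρ) : b - M *ᵥ g = ρ := by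
  set e := b - M *ᵥ g - ρ
  have he : e = M *ᵥ (x₀ - g) := by
    rw [mulVec_sub, hx₀]
    simp only [e]
    abel
  have hMe : Mᵀ *ᵥ e = 0 := by
    rw [mulVec_sub, hg.transpose_mulVec_sub_eq_zero, hρ, sub_zero]
  have : e ⬝ᵥ e = 0 := by
    nth_rewrite 1 [he]
    rw [dotProduct_comm, dotProduct_mulVec, ← mulVec_transpose, hMe, zero_dotProduct]
  exact sub_eq_zero.1 (dotProduct_self_eq_zero.1 this)

end LeastSquares

def levelResidual (A : Matrix V V ℝ) (x : V → ℝ) : V → ℝ := indeg A - (inLap A)ᵀ *ᵥ x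

theorem inLap_mulVec_apply (A : Matrix V V ℝ) (x : V → ℝ) (i : V) :
    (inLap A *ᵥ x) i = indeg A i * x i - ∑ j, A i j * x j := by
  simp [inLap, mulVec, dotProduct, diagonal_apply, sub_mul]

theorem transpose_inLap_mulVec_apply (A : Matrix V V ℝ) (x : V → ℝ) (j : V) :
    ((inLap A)ᵀ *ᵥ x) j = indeg A j * x j - ∑ i, A i j * x i := by
  simp [inLap, mulVec, dotProduct, diagonal_apply, sub_mul]

theorem sum_levelResidual (A : Matrix V V ℝ) (x : V → ℝ) :
    ∑ j, levelResidual A x j = totalWeight A - ∑ i, ∑ j, A i j * (x j - x i) := by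
  simp only [levelResidual, Pi.sub_apply, transpose_inLap_mulVec_apply, indeg, totalWeight,
    Finset.sum_mul, mul_sub, Finset.sum_sub_distrib]
  rw [Finset.sum_comm (f := fun j i => A i j), Finset.sum_comm (f := fun j i => A i j * x j),
    Finset.sum_comm (f := fun j i => A i j * x i)]

theorem etaF_mul_totalWeight {A : Matrix V V ℝ} (hW : totalWeight A ≠ 0) (x : V → ℝ) :
    etaF A x * totalWeight A = ∑ j, levelResidual A x j := by
  rw [etaF, sum_levelResidual]
  field_simp

theorem totalWeight_nonneg {α : Type} [Fintype α] {A : Matrix α α ℝ} (hA : ∀ i j, 0 ≤ A i j) :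
    0 ≤ totalWeight A :=
  Finset.sum_nonneg fun i _ => Finset.sum_nonneg fun j _ => hA i j

theorem sum_levelResidual_eq_zero {A : Matrix V V ℝ} (hA : ∀ i j, 0 ≤ A i j)
    (hW : totalWeight A = 0) (x : V → ℝ) : ∑ j, levelResidual A x j = 0 := by
  have hzero : ∀ i j, A i j = 0 := fun i j =>
    (Finset.sum_eq_zero_iff_of_nonneg fun j _ => hA i j).1
      ((Finset.sum_eq_zero_iff_of_nonneg fun i _ =>
        Finset.sum_nonneg fun j _ => hA i j).1 hW i (Finset.mem_univ i)) j (Finset.mem_univ j)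
  simp [sum_levelResidual, hW, hzero]

section Sources

variable {α : Type} {A : Matrix α α ℝ} {S T : Finset α}

theorem InClosed.inter [DecidableEq α] (hS : InClosed A S) (hT : InClosed A T) :
    InClosed A (S ∩ T) := by
  intro i j hi hj
  rw [Finset.mem_inter] at hi hj
  by_cases hiS : i ∈ S
  · exact hT i j (fun hiT => hi ⟨hiS, hiT⟩) hj.2
  · exact hS i j hiS hj.1

theorem InClosed.biUnion [DecidableEq α] {ι : Type} {s : Finset ι} {S : ι → Finset α}
    (h : ∀ m ∈ s, InClosed A (S m)) : InClosed A (s.biUnion S) := by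
  intro i j hi hj
  obtain ⟨m, hm, hjm⟩ := Finset.mem_biUnion.1 hj
  exact h m hm i j (fun him => hi (Finset.mem_biUnion.2 ⟨m, hm, him⟩)) hjm

theorem MinSourceSubgraph.disjoint [DecidableEq α] (hS : MinSourceSubgraph A S)
    (hT : MinSourceSubgraph A T) (hne : S ≠ T) : Disjoint S T := by
  rw [Finset.disjoint_iff_inter_eq_empty, ← Finset.not_nonempty_iff_eq_empty]
  intro hST
  have hcl := hS.2.1.inter hT.2.1
  have hS' : S ∩ T = S := by_contra fun h => hS.2.2 _ Finset.inter_subset_left hST h hcl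
  have hT' : S ∩ T = T := by_contra fun h => hT.2.2 _ Finset.inter_subset_right hST h hcl
  exact hne (hS'.symm.trans hT')

theorem InClosed.exists_minSourceSubgraph_subset (hT : InClosed A T) (hne : T.Nonempty) :
    ∃ T' ⊆ T, MinSourceSubgraph A T' := by
  induction T using Finset.strongInduction with
  | H T ih =>
    by_cases hmin : ∀ T' ⊆ T, T'.Nonempty → T' ≠ T → ¬ InClosed A T'
    · exact ⟨T, subset_rfl, hne, hT, hmin⟩
    · push Not at hmin
      obtain ⟨T', hsub, hne', hneq, hcl⟩ := hmin
      obtain ⟨T'', hsub', hmin'⟩ := ih T' (hsub.ssubset_of_ne hneq) hcl hne'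
      exact ⟨T'', hsub'.trans hsub, hmin'⟩

end Sources

omit [Fintype V] [DecidableEq V] in
theorem totalWeight_submatrixOn (A : Matrix V V ℝ) (S : Finset V) :
    totalWeight (submatrixOn A S) = ∑ i ∈ S, ∑ j ∈ S, A i j := by
  rw [← Finset.sum_coe_sort S]
  exact Finset.sum_congr rfl fun i _ => Finset.sum_coe_sort S (A i)

section Restriction

variable {A : Matrix V V ℝ} {S : Finset V}

omit [DecidableEq V] in
theorem indeg_submatrixOn (hS : InClosed A S) (j : S) :
    indeg (submatrixOn A S) j = indeg A j := by
  rw [indeg, indeg, ← Finset.sum_subset (Finset.subset_univ S) fun i _ hi => hS i j hi j.2]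
  exact Finset.sum_coe_sort S fun i => A i j

theorem transpose_inLap_mulVec_apply_of_inClosed (hS : InClosed A S) (x : V → ℝ) (j : S) :
    ((inLap A)ᵀ *ᵥ x) j = ((inLap (submatrixOn A S))ᵀ *ᵥ fun i : S => x i) j := by
  rw [transpose_inLap_mulVec_apply, transpose_inLap_mulVec_apply, indeg_submatrixOn hS,
    ← Finset.sum_subset (Finset.subset_univ S) fun i _ hi => by rw [hS i j hi j.2, zero_mul]]
  exact congrArg _ (Finset.sum_coe_sort S fun i => A i j * x i).symm

def extendByZero (S : Finset V) (v : S → ℝ) : V → ℝ := fun i => if h : i ∈ S then v ⟨i, h⟩ else 0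

omit [Fintype V] in
theorem extendByZero_apply (v : S → ℝ) (j : S) : extendByZero S v j = v j := by
  simp [extendByZero]

omit [Fintype V] in
theorem extendByZero_apply_of_notMem (v : S → ℝ) {j : V} (hj : j ∉ S) :
    extendByZero S v j = 0 := by
  simp [extendByZero, hj]

omit [Fintype V] in
@[simp]
theorem extendByZero_zero : extendByZero S 0 = 0 := by
  funext i
  simp [extendByZero]

theorem sum_mul_extendByZero (v : S → ℝ) (f : V → ℝ) :
    ∑ j, f j * extendByZero S v j = ∑ j : S, f j * v j := by
  rw [← Finset.sum_subset (Finset.subset_univ S) fun j _ hj => by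
    rw [extendByZero_apply_of_notMem v hj, mul_zero], ← Finset.sum_coe_sort S]
  simp only [extendByZero_apply]

theorem sum_extendByZero (v : S → ℝ) : ∑ j, extendByZero S v j = ∑ j : S, v j := by
  simpa using sum_mul_extendByZero v 1

theorem inLap_mulVec_extendByZero (hS : InClosed A S) (v : S → ℝ) :
    inLap A *ᵥ extendByZero S v = extendByZero S (inLap (submatrixOn A S) *ᵥ v) := by
  funext i
  rw [inLap_mulVec_apply, sum_mul_extendByZero]
  by_cases hi : i ∈ S
  · rw [extendByZero_apply v ⟨i, hi⟩, extendByZero_apply _ ⟨i, hi⟩, inLap_mulVec_apply,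
      indeg_submatrixOn hS]
    rfl
  · simp [extendByZero_apply_of_notMem _ hi, hS i _ hi]

end Restriction

section MaximumPrinciple

variable {A : Matrix V V ℝ}

theorem abs_eq_of_transpose_inLap_mulVec_apply_eq_zero (hA : ∀ i j, 0 ≤ A i j) {z : V → ℝ}
    {c : ℝ} (hle : ∀ i, |z i| ≤ c) {j : V} (hj : |z j| = c) (hz : ((inLap A)ᵀ *ᵥ z) j = 0)
    {i : V} (hij : A i j ≠ 0) : |z i| = c := by
  rw [transpose_inLap_mulVec_apply, sub_eq_zero] at hz
  have hdeg : 0 ≤ indeg A j := Finset.sum_nonneg fun i _ => hA i j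
  have hbound : c * indeg A j ≤ ∑ i, A i j * |z i| :=
    calc c * indeg A j = |indeg A j * z j| := by
          rw [abs_mul, abs_of_nonneg hdeg, hj, mul_comm]
      _ = |∑ i, A i j * z i| := by rw [hz]
      _ ≤ ∑ i, |A i j * z i| := Finset.abs_sum_le_sum_abs _ _
      _ = ∑ i, A i j * |z i| := by simp only [abs_mul, abs_of_nonneg (hA _ j)]
  have hterms : ∀ i ∈ Finset.univ, 0 ≤ A i j * (c - |z i|) := fun i _ =>
    mul_nonneg (hA i j) (sub_nonneg.2 (hle i))
  have hsum : ∑ i, A i j * (c - |z i|) = 0 := by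
    refine le_antisymm ?_ (Finset.sum_nonneg hterms)
    simp only [mul_sub, Finset.sum_sub_distrib, ← Finset.sum_mul]
    rw [← indeg]
    linarith
  have := (Finset.sum_eq_zero_iff_of_nonneg hterms).1 hsum i (Finset.mem_univ i)
  linarith [(mul_eq_zero.1 this).resolve_left hij]

theorem eq_zero_of_transpose_inLap_mulVec_apply_eq_zero (hA : ∀ i j, 0 ≤ A i j) {z : V → ℝ}
    (hsrc : ∀ T, MinSourceSubgraph A T → ∃ j ∈ T, z j = 0)
    (hz : ∀ j, z j ≠ 0 → ((inLap A)ᵀ *ᵥ z) j = 0) : z = 0 := by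
  by_contra hne
  obtain ⟨j₀, hj₀⟩ : ∃ j, z j ≠ 0 := Function.ne_iff.1 hne
  obtain ⟨jmax, -, hmax⟩ :=
    Finset.exists_max_image Finset.univ (fun i => |z i|) ⟨j₀, Finset.mem_univ _⟩
  set c := |z jmax|
  have hc : 0 < c := (abs_pos.2 hj₀).trans_le (hmax j₀ (Finset.mem_univ _))
  set K := Finset.univ.filter fun j => |z j| = c
  have hK : InClosed A K := by
    intro i j hi hj
    simp only [K, Finset.mem_filter, Finset.mem_univ, true_and] at hi hj
    have hzj : z j ≠ 0 := fun h => by rw [h, abs_zero] at hj; linarith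
    by_contra hij
    exact hi (abs_eq_of_transpose_inLap_mulVec_apply_eq_zero hA
      (fun i => hmax i (Finset.mem_univ i)) hj (hz j hzj) hij)
  obtain ⟨T, hTK, hT⟩ :=
    hK.exists_minSourceSubgraph_subset ⟨jmax, Finset.mem_filter.2 ⟨Finset.mem_univ _, rfl⟩⟩
  obtain ⟨j, hjT, hj⟩ := hsrc T hT
  have := (Finset.mem_filter.1 (hTK hjT)).2
  rw [hj, abs_zero] at this
  linarith

theorem exists_transpose_inLap_mulVec_eq (hA : ∀ i j, 0 ≤ A i j) {U : Finset V}
    (hU : InClosed A U) (hsrc : ∀ T, MinSourceSubgraph A T → T ⊆ U) {c : V → ℝ}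
    (hc : ∀ j ∈ U, c j = 0) : ∃ z, (inLap A)ᵀ *ᵥ z = c := by
  set N : Matrix (Uᶜ : Finset V) (Uᶜ : Finset V) ℝ := ((inLap A)ᵀ).submatrix (↑) (↑)
  have hN : ∀ w j, (N *ᵥ w) j = ((inLap A)ᵀ *ᵥ extendByZero Uᶜ w) j := fun w j =>
    (sum_mul_extendByZero w fun i => (inLap A)ᵀ j i).symm
  have hdet : N.det ≠ 0 := by
    rw [Ne, ← exists_mulVec_eq_zero_iff]
    rintro ⟨w, hw, hNw⟩
    have hz := eq_zero_of_transpose_inLap_mulVec_apply_eq_zero hA (z := extendByZero Uᶜ w)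
      (fun T hT => by
        obtain ⟨j, hj⟩ := hT.1
        exact ⟨j, hj, extendByZero_apply_of_notMem w (Finset.notMem_compl.2 (hsrc T hT hj))⟩)
      (fun j hj => by
        have hjU : j ∈ Uᶜ := by_contra fun h => hj (extendByZero_apply_of_notMem w h)
        rw [← hN w ⟨j, hjU⟩, hNw, Pi.zero_apply])
    exact hw (funext fun j => by simpa [extendByZero_apply] using congrFun hz j)
  obtain ⟨w, hw⟩ := mulVec_surjective_iff_isUnit.2
    ((isUnit_iff_isUnit_det N).2 (isUnit_iff_ne_zero.2 hdet)) fun j => c j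
  refine ⟨extendByZero Uᶜ w, funext fun j => ?_⟩
  by_cases hj : j ∈ U
  · have hzero : (fun i : U => extendByZero Uᶜ w i) = 0 :=
      funext fun i => extendByZero_apply_of_notMem w (Finset.notMem_compl.2 i.2)
    rw [transpose_inLap_mulVec_apply_of_inClosed hU _ ⟨j, hj⟩, hzero, mulVec_zero, hc j hj]
    rfl
  · rw [← hN w ⟨j, Finset.mem_compl.2 hj⟩, hw]

end MaximumPrinciple

theorem inLap_mulVec_levelResidual {A : Matrix V V ℝ} {g : V → ℝ} (hg : IsFHL A g) :
    inLap A *ᵥ levelResidual A g = 0 := by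
  have := IsLeastSquaresSolution.transpose_mulVec_sub_eq_zero hg
  rwa [transpose_transpose] at this

section Decomposition

variable {A : Matrix V V ℝ} {ι : Type} [Fintype ι] {S : ι → Finset V}

omit [Fintype V] in
theorem sum_extendByZero_apply_of_mem (hdisj : Pairwise fun m m' => Disjoint (S m) (S m'))
    (v : (m : ι) → S m → ℝ) {m : ι} (j : S m) :
    (∑ m', extendByZero (S m') (v m')) j = v m j := by
  rw [Finset.sum_apply, Finset.sum_eq_single m, extendByZero_apply]
  · exact fun m' _ hm' => extendByZero_apply_of_notMem _ (Finset.disjoint_right.1 (hdisj hm') j.2)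
  · exact fun h => absurd (Finset.mem_univ m) h

theorem levelResidual_eq_sum_extendByZero (hA : ∀ i j, 0 ≤ A i j)
    (hS : ∀ m, InClosed A (S m)) (hdisj : Pairwise fun m m' => Disjoint (S m) (S m'))
    (hsrc : ∀ T, MinSourceSubgraph A T → ∃ m, T ⊆ S m) {g : V → ℝ} (hg : IsFHL A g)
    {gS : (m : ι) → S m → ℝ} (hgS : ∀ m, IsFHL (submatrixOn A (S m)) (gS m)) :
    levelResidual A g =
      ∑ m, extendByZero (S m) (levelResidual (submatrixOn A (S m)) (gS m)) := by
  set ρ := ∑ m, extendByZero (S m) (levelResidual (submatrixOn A (S m)) (gS m))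
  set y := ∑ m, extendByZero (S m) (gS m)
  have hker : (inLap A)ᵀᵀ *ᵥ ρ = 0 := by
    simp only [ρ, transpose_transpose, mulVec_sum, inLap_mulVec_extendByZero (hS _),
      inLap_mulVec_levelResidual (hgS _), extendByZero_zero, Finset.sum_const_zero]
  have hagree : ∀ m (j : S m), ((inLap A)ᵀ *ᵥ y) j = indeg A j - ρ j := by
    intro m j
    have hy : (fun i : S m => y i) = gS m := funext (sum_extendByZero_apply_of_mem hdisj gS)
    have hρ : ρ j = levelResidual (submatrixOn A (S m)) (gS m) j :=
      sum_extendByZero_apply_of_mem hdisj _ j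
    rw [transpose_inLap_mulVec_apply_of_inClosed (hS m), hy, hρ, levelResidual, Pi.sub_apply,
      indeg_submatrixOn (hS m), sub_sub_cancel]
  obtain ⟨z, hz⟩ := exists_transpose_inLap_mulVec_eq hA
    (U := Finset.univ.biUnion S) (InClosed.biUnion fun m _ => hS m)
    (fun T hT => (hsrc T hT).elim fun m hm =>
      hm.trans (Finset.subset_biUnion_of_mem S (Finset.mem_univ m)))
    (c := indeg A - ρ - (inLap A)ᵀ *ᵥ y) (fun j hj => by
      obtain ⟨m, -, hjm⟩ := Finset.mem_biUnion.1 hj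
      simp only [Pi.sub_apply, hagree m ⟨j, hjm⟩, sub_self])
  exact IsLeastSquaresSolution.sub_mulVec_eq hg hker (x₀ := y + z)
    (by rw [mulVec_add, hz]; abel)

end Decomposition

theorem stmt_19_general {n : ℕ} (A : Matrix (Fin n) (Fin n) ℝ)
    (hA : ∀ i j, 0 ≤ A i j) (hW : 0 < totalWeight A)
    (l : ℕ) (S : Fin l → Finset (Fin n)) (hinj : Function.Injective S)
    (hall : ∀ T : Finset (Fin n), MinSourceSubgraph A T ↔ ∃ m, T = S m)
    (g : Fin n → ℝ) (hg : IsFHL A g)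
    (gS : (m : Fin l) → {i // i ∈ S m} → ℝ)
    (hgS : ∀ m : Fin l, IsFHL (submatrixOn A (S m)) (gS m)) :
    etaF A g =
      (∑ m ∈ Finset.univ.filter (fun m : Fin l => 0 < ∑ i ∈ S m, ∑ j ∈ S m, A i j),
          etaF (submatrixOn A (S m)) (gS m) * (∑ i ∈ S m, ∑ j ∈ S m, A i j)) /
        ((totalWeight A - ∑ m : Fin l, ∑ i ∈ S m, ∑ j ∈ S m, A i j) +
          ∑ m : Fin l, ∑ i ∈ S m, ∑ j ∈ S m, A i j) := by
  have hmin : ∀ m, MinSourceSubgraph A (S m) := fun m => (hall _).2 ⟨m, rfl⟩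
  have hres := levelResidual_eq_sum_extendByZero hA (fun m => (hmin m).2.1)
    (fun m m' hne => (hmin m).disjoint (hmin m') (hinj.ne hne))
    (fun T hT => ((hall T).1 hT).imp fun _ h => h.le) hg hgS
  rw [sub_add_cancel, eq_div_iff hW.ne', etaF_mul_totalWeight hW.ne', hres, Finset.sum_filter]
  simp only [Finset.sum_apply]
  rw [Finset.sum_comm]
  refine Finset.sum_congr rfl fun m _ => ?_
  rw [sum_extendByZero, ← totalWeight_submatrixOn]
  split_ifs with hpos
  · exact (etaF_mul_totalWeight hpos.ne' _).symm
  · have hAm : ∀ i j, 0 ≤ submatrixOn A (S m) i j := fun i j => hA i j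
    exact sum_levelResidual_eq_zero hAm (le_antisymm (not_lt.1 hpos) (totalWeight_nonneg hAm)) _

theorem stmt_19 {n : ℕ} (hn : 0 < n) (A : Matrix (Fin n) (Fin n) ℝ)
    (hA : ∀ i j, 0 ≤ A i j) (hdiag : ∀ i, A i i = 0)
    (hwc : WeaklyConnected A) (hW : 0 < totalWeight A)
    (hdec : ∃ S : Finset (Fin n), MinSourceSubgraph A S ∧ S ≠ Finset.univ)
    (l : ℕ) (S : Fin l → Finset (Fin n)) (hinj : Function.Injective S)
    (hall : ∀ T : Finset (Fin n), MinSourceSubgraph A T ↔ ∃ m, T = S m)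
    (g : Fin n → ℝ) (hg : IsFHL A g)
    (gS : (m : Fin l) → {i // i ∈ S m} → ℝ)
    (hgS : ∀ m : Fin l, IsFHL (submatrixOn A (S m)) (gS m)) :
    etaF A g =
      (∑ m ∈ Finset.univ.filter (fun m : Fin l => 0 < ∑ i ∈ S m, ∑ j ∈ S m, A i j),
          etaF (submatrixOn A (S m)) (gS m) * (∑ i ∈ S m, ∑ j ∈ S m, A i j)) /
        ((totalWeight A - ∑ m : Fin l, ∑ i ∈ S m, ∑ j ∈ S m, A i j) +
          ∑ m : Fin l, ∑ i ∈ S m, ∑ j ∈ S m, A i j) :=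
  stmt_19_general A hA hW l S hinj hall g hg gS hgS
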